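/- arXiv:2501.13226 — 5 statements merged into one kernel-verified Lean document; each statement's English description precedes it below -/
import Mathlib

section
/- Define the value iteration operator: V_{t+1}(s) = min{V_t^0(s), V_t^1(s), V_t^2(s)} where V_t^0(s) = s + r·V_t(s+1) + (1-r)·V_t(0), V_t^1(s) = s + λ₁ + (1-ρp)r·V_t(s+1) + ((1-ρp)(1-r)+ρp)·V_t(0), V_t^2(s) = s + λ₂ + (1-ρq)r·V_t(s+1) + ((1-ρq)(1-r)+ρq)·V_t(0), with r = (1-r₀) if s = 0 and r = r₁ if s > 0. If V_t : ℕ → ℝ is monotone increasing, V₀ = 0, r₀, r₁, ρ, p, q ∈ [0,1], r₀ + r₁ ≥ 1, and λ₁, λ₂ ≥ 0, then V_{t+1} is monotone increasing. -/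
/-!
Each action value has the form `s + λ + c · r(s) · (V(s+1) - V(0)) + V(0)` with `c ≥ 0` the
probability that the action does not stabilize the system. Since `r(0) = 1 - r₀ ≤ r₁ = r(s)` for
`s > 0`, the transition probability `r` is monotone and nonnegative, and `V(s+1) - V(0)` is
monotone and nonnegative, so each action value is monotone in `s`; a minimum of monotone functions is monotone.
-/

/-- `c` is the probability that the action leaves the system unstabilized; the paper's `V_t^a` is
`actionValue V r λ_a (1 - ρ·p_a)` with `λ_0 = 0`, `p_0 = 0`. -/
def actionValue (V r : ℕ → ℝ) (cost c : ℝ) (s : ℕ) : ℝ :=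
  s + cost + c * r s * V (s + 1) + (c * (1 - r s) + (1 - c)) * V 0

theorem actionValue_eq (V r : ℕ → ℝ) (cost c : ℝ) (s : ℕ) :
    actionValue V r cost c s = s + cost + V 0 + c * (r s * (V (s + 1) - V 0)) := by
  unfold actionValue
  ring

theorem monotone_actionValue {V r : ℕ → ℝ} (hV : Monotone V) (hr : Monotone r)
    (hr₀ : ∀ s, 0 ≤ r s) (cost : ℝ) {c : ℝ} (hc : 0 ≤ c) :
    Monotone (actionValue V r cost c) := by
  have hgain : Monotone fun s => V (s + 1) - V 0 :=
    fun _ _ h => sub_le_sub_right (hV (Nat.succ_le_succ h)) _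
  have hgain₀ : ∀ s, 0 ≤ V (s + 1) - V 0 := fun s => sub_nonneg.2 (hV (Nat.zero_le _))
  have hprod : Monotone fun s => r s * (V (s + 1) - V 0) := hr.mul hgain hr₀ hgain₀
  intro a b hab
  simp only [actionValue_eq]
  gcongr ?_ + _ + _ + c * ?_
  · exact Nat.cast_le.2 hab
  · exact hprod hab

theorem monotone_ite_eq_zero {α : Type*} [Preorder α] {a b : α} (hab : a ≤ b) :
    Monotone fun s : ℕ => if s = 0 then a else b :=
  monotone_nat_of_le_succ fun s => by split_ifs <;> simp_all

theorem aosi_value_iteration_step_monotone_general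
    (r₀ r₁ ρ p q lam₁ lam₂ : ℝ)
    (hr₀ : r₀ ∈ Set.Icc (0:ℝ) 1)
    (hρ : ρ ∈ Set.Icc (0:ℝ) 1) (hp : p ∈ Set.Icc (0:ℝ) 1) (hq : q ∈ Set.Icc (0:ℝ) 1)
    (hsum : 1 ≤ r₀ + r₁)
    (V : ℕ → ℝ) (hV : Monotone V)
    (r : ℕ → ℝ) (hr : ∀ s, r s = if s = 0 then 1 - r₀ else r₁)
    (V0 V1 V2 Vnext : ℕ → ℝ)
    (hV0def : ∀ s, V0 s = (s : ℝ) + r s * V (s + 1) + (1 - r s) * V 0)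
    (hV1def : ∀ s, V1 s = (s : ℝ) + lam₁ + (1 - ρ * p) * r s * V (s + 1)
        + ((1 - ρ * p) * (1 - r s) + ρ * p) * V 0)
    (hV2def : ∀ s, V2 s = (s : ℝ) + lam₂ + (1 - ρ * q) * r s * V (s + 1)
        + ((1 - ρ * q) * (1 - r s) + ρ * q) * V 0)
    (hVnext : ∀ s, Vnext s = min (V0 s) (min (V1 s) (V2 s))) :
    Monotone Vnext := by
  have hr_mono : Monotone r := by
    rw [funext hr]
    exact monotone_ite_eq_zero (by linarith)
  have hr_nonneg : ∀ s, 0 ≤ r s := fun s =>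
    calc 0 ≤ 1 - r₀ := sub_nonneg.2 hr₀.2
      _ = r 0 := (hr 0).symm
      _ ≤ r s := hr_mono (Nat.zero_le s)
  have hfail : ∀ {x}, x ∈ Set.Icc (0:ℝ) 1 → 0 ≤ 1 - ρ * x := fun hx =>
    sub_nonneg.2 (mul_le_one₀ hρ.2 hx.1 hx.2)
  have h0 : V0 = actionValue V r 0 1 := funext fun s => by rw [hV0def, actionValue]; ring
  have h1 : V1 = actionValue V r lam₁ (1 - ρ * p) :=
    funext fun s => by rw [hV1def, actionValue]; ring
  have h2 : V2 = actionValue V r lam₂ (1 - ρ * q) :=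
    funext fun s => by rw [hV2def, actionValue]; ring
  have hmono := monotone_actionValue hV hr_mono hr_nonneg
  rw [funext hVnext, h0, h1, h2]
  exact (hmono 0 zero_le_one).min ((hmono lam₁ (hfail hp)).min (hmono lam₂ (hfail hq)))

/-- One step of relative value iteration for the AoSI MDP preserves monotonicity. -/
theorem aosi_value_iteration_step_monotone
    (r₀ r₁ ρ p q lam₁ lam₂ : ℝ)
    (hr₀ : r₀ ∈ Set.Icc (0:ℝ) 1) (hr₁ : r₁ ∈ Set.Icc (0:ℝ) 1)
    (hρ : ρ ∈ Set.Icc (0:ℝ) 1) (hp : p ∈ Set.Icc (0:ℝ) 1) (hq : q ∈ Set.Icc (0:ℝ) 1)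
    (hsum : 1 ≤ r₀ + r₁) (hlam₁ : 0 ≤ lam₁) (hlam₂ : 0 ≤ lam₂)
    (V : ℕ → ℝ) (hV : Monotone V) (hV0 : V 0 = 0)
    (r : ℕ → ℝ) (hr : ∀ s, r s = if s = 0 then 1 - r₀ else r₁)
    (V0 V1 V2 Vnext : ℕ → ℝ)
    (hV0def : ∀ s, V0 s = (s : ℝ) + r s * V (s + 1) + (1 - r s) * V 0)
    (hV1def : ∀ s, V1 s = (s : ℝ) + lam₁ + (1 - ρ * p) * r s * V (s + 1)
        + ((1 - ρ * p) * (1 - r s) + ρ * p) * V 0)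
    (hV2def : ∀ s, V2 s = (s : ℝ) + lam₂ + (1 - ρ * q) * r s * V (s + 1)
        + ((1 - ρ * q) * (1 - r s) + ρ * q) * V 0)
    (hVnext : ∀ s, Vnext s = min (V0 s) (min (V1 s) (V2 s))) :
    Monotone Vnext :=
  aosi_value_iteration_step_monotone_general r₀ r₁ ρ p q lam₁ lam₂ hr₀ hρ hp hq hsum V hV r hr V0 V1
    V2 Vnext hV0def hV1def hV2def hVnext
end

section
/- Consider the optimal policy δ*(s) = argmin over δ ∈ {0,1,2} of V^δ(s) for the AoSI Bellman equation, where V is monotone increasing, q > p, λ₂ > λ₁ ≥ 0, ρ, r₁ ∈ (0,1]. Then the policy is multi-threshold: there exist n₁ ≤ n₂ in ℕ ∪ {∞} such that δ*(s) = 0 for s < n₁, δ*(s) = 1 for n₁ ≤ s < n₂, and δ*(s) = 2 for s ≥ n₂. -/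
/-!
Each pairwise cost difference has the form `V^i(s) - V^j(s) = (λᵢ - λⱼ) - c · (V(s+1) - V(0))`
with `λᵢ - λⱼ ≥ 0` for `i > j`. Since `V(s+1) - V(0)` is nonnegative and increasing, the set of
states where `V^j(s) ≤ V^i(s)` is a lower set of `ℕ`, whatever the sign of `c`. The policy is `0`
on the lower set `{V^0 ≤ V^1 ∧ V^0 ≤ V^2}`, and `2` exactly off the larger lower set obtained by
adding `{V^1 ≤ V^2}`; lower sets of `ℕ` are initial segments `{s | s < n}` with `n ∈ ℕ ∪ {∞}`.
-/

theorem isLowerSet_setOf_le_of_sub_eq {α : Type*} [Preorder α] {f g D : α → ℝ} {c lam : ℝ}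
    (hD : Monotone D) (hD0 : ∀ s, 0 ≤ D s) (hlam : 0 ≤ lam)
    (hfg : ∀ s, f s - g s = lam - c * D s) :
    IsLowerSet {s | g s ≤ f s} := by
  intro t s hst (ht : g t ≤ f t)
  change g s ≤ f s
  have hs := hfg s
  have ht' := hfg t
  rcases le_or_gt c 0 with hc | hc
  · linarith [mul_nonpos_of_nonpos_of_nonneg hc (hD0 s)]
  · linarith [mul_le_mul_of_nonneg_left (hD hst) hc.le]

theorem IsLowerSet.exists_enat_mem_iff_lt {S : Set ℕ} (hS : IsLowerSet S) :
    ∃ n : ℕ∞, ∀ s : ℕ, s ∈ S ↔ (s : ℕ∞) < n := by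
  rcases hS.eq_univ_or_Iio with rfl | ⟨a, rfl⟩
  · exact ⟨⊤, by simp⟩
  · exact ⟨a, by simp⟩

theorem exists_multithreshold_of_isLowerSet {A B : ℕ → Prop} [DecidablePred A] [DecidablePred B]
    (hA : IsLowerSet {s | A s}) (hB : IsLowerSet {s | B s})
    (δ : ℕ → ℕ) (hδ : ∀ s, δ s = if A s then 0 else if B s then 1 else 2) :
    ∃ n₁ n₂ : ℕ∞, n₁ ≤ n₂ ∧ ∀ s : ℕ,
      ((s : ℕ∞) < n₁ → δ s = 0) ∧
      (n₁ ≤ (s : ℕ∞) ∧ (s : ℕ∞) < n₂ → δ s = 1) ∧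
      (n₂ ≤ (s : ℕ∞) → δ s = 2) := by
  obtain ⟨n₁, hn₁⟩ := hA.exists_enat_mem_iff_lt
  obtain ⟨n₂, hn₂⟩ := (hA.union hB).exists_enat_mem_iff_lt
  simp only [Set.mem_ofPred_eq, Set.mem_union] at hn₁ hn₂
  have hle : n₁ ≤ n₂ := by
    by_contra! hlt
    obtain ⟨m, rfl⟩ := ENat.ne_top_iff_exists.1 (ne_top_of_lt hlt)
    exact lt_irrefl _ ((hn₂ m).1 (.inl ((hn₁ m).2 hlt)))
  refine ⟨n₁, n₂, hle, fun s => ⟨fun hs => ?_, fun ⟨hs₁, hs₂⟩ => ?_, fun hs => ?_⟩⟩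
  · simp [hδ, (hn₁ s).2 hs]
  · have hnA : ¬A s := fun h => (hn₁ s).1 h |>.not_ge hs₁
    have hB' : B s := ((hn₂ s).2 hs₂).resolve_left hnA
    simp [hδ, hnA, hB']
  · have hnAB := mt (hn₂ s).1 (not_lt.2 hs)
    simp only [not_or] at hnAB
    simp [hδ, hnAB.1, hnAB.2]

theorem aosi_optimal_policy_multithreshold_general
    (lam₁ lam₂ ρ p q r₁ : ℝ)
    (hlam₁ : 0 ≤ lam₁) (hlam : lam₁ < lam₂)
    (V : ℕ → ℝ) (hV : Monotone V)
    (V0 V1 V2 : ℕ → ℝ)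
    (hV0 : ∀ s, V0 s = (s : ℝ) + r₁ * V (s + 1) + (1 - r₁) * V 0)
    (hV1 : ∀ s, V1 s = (s : ℝ) + lam₁ + (1 - ρ * p) * r₁ * V (s + 1)
        + ((1 - ρ * p) * (1 - r₁) + ρ * p) * V 0)
    (hV2 : ∀ s, V2 s = (s : ℝ) + lam₂ + (1 - ρ * q) * r₁ * V (s + 1)
        + ((1 - ρ * q) * (1 - r₁) + ρ * q) * V 0)
    (δstar : ℕ → ℕ)
    (hδ : ∀ s, δstar s =
      if V0 s ≤ V1 s ∧ V0 s ≤ V2 s then 0 else if V1 s ≤ V2 s then 1 else 2) :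
    ∃ n₁ n₂ : ℕ∞, n₁ ≤ n₂ ∧ ∀ s : ℕ,
      ((s : ℕ∞) < n₁ → δstar s = 0) ∧
      (n₁ ≤ (s : ℕ∞) ∧ (s : ℕ∞) < n₂ → δstar s = 1) ∧
      (n₂ ≤ (s : ℕ∞) → δstar s = 2) := by
  set D : ℕ → ℝ := fun s => V (s + 1) - V 0
  have hD : Monotone D := fun s t hst => sub_le_sub_right (hV (by omega)) _
  have hD0 : ∀ s, 0 ≤ D s := fun s => sub_nonneg.2 (hV (Nat.zero_le _))
  have h01 : IsLowerSet {s | V0 s ≤ V1 s} :=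
    isLowerSet_setOf_le_of_sub_eq (c := ρ * p * r₁) hD hD0 hlam₁
      fun s => by simp only [D, hV0, hV1]; ring
  have h02 : IsLowerSet {s | V0 s ≤ V2 s} :=
    isLowerSet_setOf_le_of_sub_eq (c := ρ * q * r₁) hD hD0 (hlam₁.trans hlam.le)
      fun s => by simp only [D, hV0, hV2]; ring
  have h12 : IsLowerSet {s | V1 s ≤ V2 s} :=
    isLowerSet_setOf_le_of_sub_eq (c := ρ * (q - p) * r₁) hD hD0 (sub_nonneg.2 hlam.le)
      fun s => by simp only [D, hV1, hV2]; ring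
  exact exists_multithreshold_of_isLowerSet
    (A := fun s => V0 s ≤ V1 s ∧ V0 s ≤ V2 s) (h01.inter h02) h12 δstar hδ

/-- The optimal policy for the AoSI Bellman equation is multi-threshold: idle below n₁,
transmit compressed between n₁ and n₂, transmit uncompressed from n₂ onward. -/
theorem aosi_optimal_policy_multithreshold
    (lam₁ lam₂ ρ p q r₁ : ℝ)
    (hq : p < q) (hlam₁ : 0 ≤ lam₁) (hlam : lam₁ < lam₂)
    (hρ : ρ ∈ Set.Ioc (0:ℝ) 1) (hr₁ : r₁ ∈ Set.Ioc (0:ℝ) 1)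
    (V : ℕ → ℝ) (hV : Monotone V)
    (V0 V1 V2 : ℕ → ℝ)
    (hV0 : ∀ s, V0 s = (s : ℝ) + r₁ * V (s + 1) + (1 - r₁) * V 0)
    (hV1 : ∀ s, V1 s = (s : ℝ) + lam₁ + (1 - ρ * p) * r₁ * V (s + 1)
        + ((1 - ρ * p) * (1 - r₁) + ρ * p) * V 0)
    (hV2 : ∀ s, V2 s = (s : ℝ) + lam₂ + (1 - ρ * q) * r₁ * V (s + 1)
        + ((1 - ρ * q) * (1 - r₁) + ρ * q) * V 0)
    (δstar : ℕ → ℕ)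
    (hδ : ∀ s, δstar s =
      if V0 s ≤ V1 s ∧ V0 s ≤ V2 s then 0 else if V1 s ≤ V2 s then 1 else 2) :
    ∃ n₁ n₂ : ℕ∞, n₁ ≤ n₂ ∧ ∀ s : ℕ,
      ((s : ℕ∞) < n₁ → δstar s = 0) ∧
      (n₁ ≤ (s : ℕ∞) ∧ (s : ℕ∞) < n₂ → δstar s = 1) ∧
      (n₂ ≤ (s : ℕ∞) → δstar s = 2) :=
  aosi_optimal_policy_multithreshold_general lam₁ lam₂ ρ p q r₁ hlam₁ hlam V hV V0 V1 V2 hV0 hV1 hV2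
    δstar hδ
end

section
/- Let 0 ≤ a, b, c < 1, d > 0, and n₁, n₂ ∈ ℕ with 0 < n₁ ≤ n₂. Define u : ℕ → ℝ by u(0) = u₀, u(i) = d·a^{i-1}·u₀ for 1 ≤ i ≤ n₁, u(i) = d·a^{n₁-1}·b^{i-n₁}·u₀ for n₁ < i ≤ n₂, u(i) = d·a^{n₁-1}·b^{n₂-n₁}·c^{i-n₂}·u₀ for i > n₂, where u₀ = (1-a)(1-b)(1-c) / [(1-a+d)(1-c)(1-b) + (1-c)(b-a)·d·a^{n₁-1} + d(1-a)(c-b)·b^{n₂-n₁}·a^{n₁-1}]. Then ∑_{i=0}^∞ u(i) = 1. -/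
/-!
The stationary profile is geometric on each of the three runs `[1, n₁]`, `[n₁, n₂]` and `[n₂, ∞)`,
with ratios `a`, `b` and `c`. Summing the two finite geometric runs and the geometric tail and
clearing the denominators `1 - a`, `1 - b`, `1 - c` turns the total mass into `u₀ D / ((1-a)(1-b)(1-c))`,
where `D` is the denominator in the definition of `u₀`.
-/

open Finset

theorem sum_Ico_mul_one_sub_of_geometric {R : Type*} [CommRing R] {u : ℕ → R} {r : R} {m n : ℕ}
    (h : ∀ k, m + k < n → u (m + k) = u m * r ^ k) :
    (∑ i ∈ Ico m n, u i) * (1 - r) = u m * (1 - r ^ (n - m)) := by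
  rw [sum_Ico_eq_sum_range, sum_congr rfl fun k hk => h k (by rw [mem_range] at hk; omega),
    ← mul_sum, mul_assoc, geom_sum_mul_neg]

theorem hasSum_of_geometric_tail {K : Type*} [NormedDivisionRing K] {u : ℕ → K} {c : K} {m : ℕ}
    (hc : ‖c‖ < 1) (h : ∀ k, u (m + k) = u m * c ^ k) :
    HasSum u (∑ i ∈ range m, u i + u m * (1 - c)⁻¹) := by
  refine (hasSum_nat_add_iff' m).mp ?_
  rw [add_sub_cancel_left]
  simpa only [add_comm _ m, h] using (hasSum_geometric_of_norm_lt_one hc).mul_left (u m)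

/-- The stationary distribution of the AoSI chain, with its mass `u₀` at `0` left free. -/
def aosiProfile (a b c d u₀ : ℝ) (n₁ n₂ : ℕ) (i : ℕ) : ℝ :=
  if i = 0 then u₀
  else if i ≤ n₁ then d * a ^ (i - 1) * u₀
  else if i ≤ n₂ then d * a ^ (n₁ - 1) * b ^ (i - n₁) * u₀
  else d * a ^ (n₁ - 1) * b ^ (n₂ - n₁) * c ^ (i - n₂) * u₀

def aosiNormalizer (a b c d : ℝ) (n₁ n₂ : ℕ) : ℝ :=
  (1 - a + d) * (1 - c) * (1 - b) + (1 - c) * (b - a) * d * a ^ (n₁ - 1)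
    + d * (1 - a) * (c - b) * b ^ (n₂ - n₁) * a ^ (n₁ - 1)

namespace aosiProfile

variable {a b c d u₀ : ℝ} {n₁ n₂ : ℕ}

local notation "f" => aosiProfile a b c d u₀ n₁ n₂

theorem apply_zero : f 0 = u₀ := by
  simp [aosiProfile]

theorem apply_one (hn₁ : 0 < n₁) : f 1 = d * u₀ := by
  simp [aosiProfile, Nat.one_le_iff_ne_zero.mpr hn₁.ne']

theorem apply_n₁ (hn₁ : 0 < n₁) : f n₁ = d * a ^ (n₁ - 1) * u₀ := by
  simp [aosiProfile, hn₁.ne']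

theorem apply_n₂ (hn₁ : 0 < n₁) (hn : n₁ ≤ n₂) :
    f n₂ = d * a ^ (n₁ - 1) * b ^ (n₂ - n₁) * u₀ := by
  rcases hn.eq_or_lt with rfl | hlt
  · simp [apply_n₁ hn₁]
  · simp [aosiProfile, (hn₁.trans hlt).ne', hlt.not_ge]

theorem apply_one_add {k : ℕ} (hk : 1 + k < n₁) : f (1 + k) = f 1 * a ^ k := by
  rw [apply_one (by omega)]
  simp only [aosiProfile, if_neg (by omega : 1 + k ≠ 0), if_pos (by omega : 1 + k ≤ n₁),
    Nat.add_sub_cancel_left]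
  ring

theorem apply_n₁_add (hn₁ : 0 < n₁) {k : ℕ} (hk : n₁ + k ≤ n₂) :
    f (n₁ + k) = f n₁ * b ^ k := by
  rcases Nat.eq_zero_or_pos k with rfl | hk₀
  · simp
  rw [apply_n₁ hn₁]
  simp only [aosiProfile, if_neg (by omega : n₁ + k ≠ 0), if_neg (by omega : ¬n₁ + k ≤ n₁),
    if_pos hk, Nat.add_sub_cancel_left]
  ring

theorem apply_n₂_add (hn₁ : 0 < n₁) (hn : n₁ ≤ n₂) (k : ℕ) : f (n₂ + k) = f n₂ * c ^ k := by
  rcases Nat.eq_zero_or_pos k with rfl | hk₀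
  · simp
  rw [apply_n₂ hn₁ hn]
  simp only [aosiProfile, if_neg (by omega : n₂ + k ≠ 0), if_neg (by omega : ¬n₂ + k ≤ n₁),
    if_neg (by omega : ¬n₂ + k ≤ n₂), Nat.add_sub_cancel_left]
  ring

theorem hasSum (hn₁ : 0 < n₁) (hn : n₁ ≤ n₂) (ha : a ≠ 1) (hb : b ≠ 1) (hc : |c| < 1) :
    HasSum f (u₀ * aosiNormalizer a b c d n₁ n₂ / ((1 - a) * (1 - b) * (1 - c))) := by
  have hc₁ : 1 - c ≠ 0 := sub_ne_zero.mpr (abs_lt.mp hc).2.ne'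
  have hP : (1 - a) * (1 - b) * (1 - c) ≠ 0 :=
    mul_ne_zero (mul_ne_zero (sub_ne_zero.mpr ha.symm) (sub_ne_zero.mpr hb.symm)) hc₁
  suffices hmass : ∑ i ∈ range n₂, f i + f n₂ * (1 - c)⁻¹ = u₀ * aosiNormalizer a b c d n₁ n₂
      / ((1 - a) * (1 - b) * (1 - c)) by
    rw [← hmass]
    exact hasSum_of_geometric_tail (by rwa [Real.norm_eq_abs]) (apply_n₂_add hn₁ hn)
  have hsplit : ∑ i ∈ range n₂, f i = f 0 + ∑ i ∈ Ico 1 n₁, f i + ∑ i ∈ Ico n₁ n₂, f i := by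
    rw [range_eq_Ico, ← sum_Ico_consecutive _ (Nat.zero_le n₁) hn, sum_eq_sum_Ico_succ_bot hn₁]
  have hrun₁ := sum_Ico_mul_one_sub_of_geometric (u := f) (m := 1) (n := n₁) (r := a)
    fun k hk => apply_one_add hk
  have hrun₂ := sum_Ico_mul_one_sub_of_geometric (u := f) (m := n₁) (n := n₂) (r := b)
    fun k hk => apply_n₁_add hn₁ hk.le
  rw [apply_one hn₁] at hrun₁
  rw [apply_n₁ hn₁] at hrun₂
  rw [hsplit, apply_zero, apply_n₂ hn₁ hn, eq_div_iff hP, aosiNormalizer]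
  linear_combination (1 - b) * (1 - c) * hrun₁ + (1 - a) * (1 - c) * hrun₂
    + d * a ^ (n₁ - 1) * b ^ (n₂ - n₁) * u₀ * (1 - a) * (1 - b) * mul_inv_cancel₀ hc₁

end aosiProfile

theorem aosi_stationary_normalization_pos_thresholds_general
    (a b c d : ℝ) (ha' : a < 1) (hb' : b < 1)
    (hc : 0 ≤ c) (hc' : c < 1)
    (n₁ n₂ : ℕ) (hn₁ : 0 < n₁) (hn : n₁ ≤ n₂)
    (u₀ : ℝ)
    (hden : 0 < (1 - a + d) * (1 - c) * (1 - b) + (1 - c) * (b - a) * d * a ^ (n₁ - 1)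
        + d * (1 - a) * (c - b) * b ^ (n₂ - n₁) * a ^ (n₁ - 1))
    (hu₀ : u₀ = (1 - a) * (1 - b) * (1 - c) /
        ((1 - a + d) * (1 - c) * (1 - b) + (1 - c) * (b - a) * d * a ^ (n₁ - 1)
          + d * (1 - a) * (c - b) * b ^ (n₂ - n₁) * a ^ (n₁ - 1)))
    (u : ℕ → ℝ)
    (hu : ∀ i, u i =
      if i = 0 then u₀
      else if i ≤ n₁ then d * a ^ (i - 1) * u₀
      else if i ≤ n₂ then d * a ^ (n₁ - 1) * b ^ (i - n₁) * u₀
      else d * a ^ (n₁ - 1) * b ^ (n₂ - n₁) * c ^ (i - n₂) * u₀) :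
    ∑' i : ℕ, u i = 1 := by
  obtain rfl : u = aosiProfile a b c d u₀ n₁ n₂ := funext hu
  have hP : 0 < (1 - a) * (1 - b) * (1 - c) :=
    mul_pos (mul_pos (sub_pos.mpr ha') (sub_pos.mpr hb')) (sub_pos.mpr hc')
  rw [(aosiProfile.hasSum hn₁ hn ha'.ne hb'.ne (abs_lt.mpr ⟨by linarith, hc'⟩)).tsum_eq, hu₀,
    aosiNormalizer, div_mul_cancel₀ _ hden.ne', div_self hP.ne']

/-- Normalization of the stationary distribution of the AoSI chain under a multi-threshold
policy with 0 < n₁ ≤ n₂. -/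
theorem aosi_stationary_normalization_pos_thresholds
    (a b c d : ℝ) (ha : 0 ≤ a) (ha' : a < 1) (hb : 0 ≤ b) (hb' : b < 1)
    (hc : 0 ≤ c) (hc' : c < 1) (hd : 0 < d)
    (n₁ n₂ : ℕ) (hn₁ : 0 < n₁) (hn : n₁ ≤ n₂)
    (u₀ : ℝ)
    (hden : 0 < (1 - a + d) * (1 - c) * (1 - b) + (1 - c) * (b - a) * d * a ^ (n₁ - 1)
        + d * (1 - a) * (c - b) * b ^ (n₂ - n₁) * a ^ (n₁ - 1))
    (hu₀ : u₀ = (1 - a) * (1 - b) * (1 - c) /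
        ((1 - a + d) * (1 - c) * (1 - b) + (1 - c) * (b - a) * d * a ^ (n₁ - 1)
          + d * (1 - a) * (c - b) * b ^ (n₂ - n₁) * a ^ (n₁ - 1)))
    (u : ℕ → ℝ)
    (hu : ∀ i, u i =
      if i = 0 then u₀
      else if i ≤ n₁ then d * a ^ (i - 1) * u₀
      else if i ≤ n₂ then d * a ^ (n₁ - 1) * b ^ (i - n₁) * u₀
      else d * a ^ (n₁ - 1) * b ^ (n₂ - n₁) * c ^ (i - n₂) * u₀) :
    ∑' i : ℕ, u i = 1 :=
  aosi_stationary_normalization_pos_thresholds_general a b c d ha' hb' hc hc' n₁ n₂ hn₁ hn u₀ hden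
    hu₀ u hu
end

section
/- Let 0 ≤ a, b, c < 1, d ≥ 0, and 0 < n₁ ≤ n₂. Let u be the stationary distribution of the birth-and-reset Markov chain on ℕ with transition probabilities: from state 0, go to 1 with probability d and to 0 with probability 1-d; from state i with 1 ≤ i < n₁, go to i+1 with probability a, else reset to 0; from state i with n₁ ≤ i < n₂, go to i+1 with probability b, else reset to 0; from state i ≥ n₂, go to i+1 with probability c, else reset to 0. Then u satisfies u(i) = d·a^{i-1}·u(0) for 1 ≤ i ≤ n₁, u(i) = d·a^{n₁-1}·b^{i-n₁}·u(0) for n₁ < i ≤ n₂, and u(i) = d·a^{n₁-1}·b^{n₂-n₁}·c^{i-n₂}·u(0) for i > n₂. -/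
/-!
Balance at a state `i + 1` involves a single incoming transition, the advance from `i`, so
`u (i + 1) = step i * u i`. Hence `u i` is `u 0` times the product of the first `i` advance
probabilities, and under the threshold policy that product is `d` followed by runs of `a`, `b`
and `c`.
-/

open Finset

theorem Finset.prod_range_eq_prod_range_mul_pow {M : Type*} [CommMonoid M] {f : ℕ → M}
    {m n : ℕ} {x : M} (hmn : m ≤ n) (hf : ∀ j ∈ Ico m n, f j = x) :
    ∏ j ∈ range n, f j = (∏ j ∈ range m, f j) * x ^ (n - m) := by
  rw [← prod_range_mul_prod_Ico f hmn, prod_congr rfl hf, prod_const, Nat.card_Ico]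

section BirthReset

variable {R : Type*} [CommRing R]

def birthResetKernel (s : ℕ → R) (j k : ℕ) : R :=
  if k = j + 1 then s j else if k = 0 then 1 - s j else 0

theorem birthResetKernel_succ_right (s : ℕ → R) (j i : ℕ) :
    birthResetKernel s j (i + 1) = if j = i then s i else 0 := by
  rcases eq_or_ne j i with rfl | h
  · simp [birthResetKernel]
  · simp [birthResetKernel, h, h.symm]

variable [TopologicalSpace R] {s : ℕ → R} {u : ℕ → R}

theorem succ_eq_mul_of_birthResetKernel_balance
    (hbalance : ∀ i, u i = ∑' j, birthResetKernel s j i * u j) (i : ℕ) :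
    u (i + 1) = s i * u i := by
  rw [hbalance, tsum_eq_single i fun j hj => by simp [birthResetKernel_succ_right, hj]]
  simp [birthResetKernel_succ_right]

theorem eq_prod_mul_of_birthResetKernel_balance
    (hbalance : ∀ i, u i = ∑' j, birthResetKernel s j i * u j) (i : ℕ) :
    u i = (∏ j ∈ range i, s j) * u 0 := by
  induction i with
  | zero => simp
  | succ i ih =>
    rw [succ_eq_mul_of_birthResetKernel_balance hbalance, ih, prod_range_succ]
    ring

end BirthReset

section ThresholdRate

variable {R : Type*}

def thresholdRate (d a b c : R) (n₁ n₂ j : ℕ) : R :=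
  if j = 0 then d else if j < n₁ then a else if j < n₂ then b else c

variable [CommMonoid R] {d a b c : R} {n₁ n₂ i : ℕ}

theorem prod_range_thresholdRate_of_pos_of_le (hi : 0 < i) (hin₁ : i ≤ n₁) :
    ∏ j ∈ range i, thresholdRate d a b c n₁ n₂ j = d * a ^ (i - 1) := by
  rw [prod_range_eq_prod_range_mul_pow (m := 1) (x := a) hi, prod_range_one]
  · simp [thresholdRate]
  · intro j hj
    simp only [mem_Ico] at hj
    simp only [thresholdRate, if_neg (show j ≠ 0 by omega), if_pos (show j < n₁ by omega)]

theorem prod_range_thresholdRate_of_le_of_le (hn₁ : 0 < n₁) (hn₁i : n₁ ≤ i) (hin₂ : i ≤ n₂) :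
    ∏ j ∈ range i, thresholdRate d a b c n₁ n₂ j = d * a ^ (n₁ - 1) * b ^ (i - n₁) := by
  rw [prod_range_eq_prod_range_mul_pow hn₁i, prod_range_thresholdRate_of_pos_of_le hn₁ le_rfl]
  intro j hj
  simp only [mem_Ico] at hj
  simp only [thresholdRate, if_neg (show j ≠ 0 by omega), if_neg (show ¬j < n₁ by omega),
    if_pos (show j < n₂ by omega)]

theorem prod_range_thresholdRate_of_le (hn₁ : 0 < n₁) (hn : n₁ ≤ n₂) (hn₂i : n₂ ≤ i) :
    ∏ j ∈ range i, thresholdRate d a b c n₁ n₂ j =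
      d * a ^ (n₁ - 1) * b ^ (n₂ - n₁) * c ^ (i - n₂) := by
  rw [prod_range_eq_prod_range_mul_pow hn₂i, prod_range_thresholdRate_of_le_of_le hn₁ hn le_rfl]
  intro j hj
  simp only [mem_Ico] at hj
  simp only [thresholdRate, if_neg (show j ≠ 0 by omega), if_neg (show ¬j < n₁ by omega),
    if_neg (show ¬j < n₂ by omega)]

end ThresholdRate

theorem aosi_stationary_distribution_form_general
    (a b c d : ℝ)
    (n₁ n₂ : ℕ) (hn₁ : 0 < n₁) (hn : n₁ ≤ n₂)
    (step : ℕ → ℝ)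
    (hstep : ∀ j, step j = if j = 0 then d else if j < n₁ then a else if j < n₂ then b else c)
    (P : ℕ → ℕ → ℝ)
    (hP : ∀ j k, P j k = if k = j + 1 then step j else if k = 0 then 1 - step j else 0)
    (u : ℕ → ℝ)
    (hbalance : ∀ i, u i = ∑' j : ℕ, P j i * u j) :
    ∀ i : ℕ,
      (1 ≤ i → i ≤ n₁ → u i = d * a ^ (i - 1) * u 0) ∧
      (n₁ < i → i ≤ n₂ → u i = d * a ^ (n₁ - 1) * b ^ (i - n₁) * u 0) ∧
      (n₂ < i → u i = d * a ^ (n₁ - 1) * b ^ (n₂ - n₁) * c ^ (i - n₂) * u 0) := by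
  obtain rfl : step = thresholdRate d a b c n₁ n₂ := funext hstep
  obtain rfl : P = birthResetKernel (thresholdRate d a b c n₁ n₂) := funext₂ hP
  intro i
  rw [eq_prod_mul_of_birthResetKernel_balance hbalance i]
  refine ⟨fun hi hin₁ => ?_, fun hn₁i hin₂ => ?_, fun hn₂i => ?_⟩
  · rw [prod_range_thresholdRate_of_pos_of_le hi hin₁]
  · rw [prod_range_thresholdRate_of_le_of_le hn₁ hn₁i.le hin₂]
  · rw [prod_range_thresholdRate_of_le hn₁ hn hn₂i.le]

/-- The stationary distribution of the birth-and-reset AoSI chain under a multi-threshold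
policy has the stated geometric piecewise form. -/
theorem aosi_stationary_distribution_form
    (a b c d : ℝ) (ha : 0 ≤ a) (ha' : a < 1) (hb : 0 ≤ b) (hb' : b < 1)
    (hc : 0 ≤ c) (hc' : c < 1) (hd : 0 ≤ d)
    (n₁ n₂ : ℕ) (hn₁ : 0 < n₁) (hn : n₁ ≤ n₂)
    (step : ℕ → ℝ)
    (hstep : ∀ j, step j = if j = 0 then d else if j < n₁ then a else if j < n₂ then b else c)
    (P : ℕ → ℕ → ℝ)
    (hP : ∀ j k, P j k = if k = j + 1 then step j else if k = 0 then 1 - step j else 0)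
    (u : ℕ → ℝ) (hu_nonneg : ∀ i, 0 ≤ u i)
    (hbalance : ∀ i, u i = ∑' j : ℕ, P j i * u j)
    (hsum : ∑' i : ℕ, u i = 1) :
    ∀ i : ℕ,
      (1 ≤ i → i ≤ n₁ → u i = d * a ^ (i - 1) * u 0) ∧
      (n₁ < i → i ≤ n₂ → u i = d * a ^ (n₁ - 1) * b ^ (i - n₁) * u 0) ∧
      (n₂ < i → u i = d * a ^ (n₁ - 1) * b ^ (n₂ - n₁) * c ^ (i - n₂) * u 0) :=
  aosi_stationary_distribution_form_general a b c d n₁ n₂ hn₁ hn step hstep P hP u hbalance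
end

section
/- Let V : ℕ → ℝ be monotone increasing, r₀ + r₁ ≥ 1 with r₀, r₁ ∈ [0,1]. Define V^0(s) = s + r(s)·V(s+1) + (1-r(s))·V(0) with r(0) = 1-r₀ and r(s) = r₁ for s > 0. Then V^0(1) - V^0(0) ≥ 1 + (r₀ + r₁ - 1)(V(1) - V(0)) ≥ 0, i.e., V^0 is increasing at 0. -/
lemma idle_value_one_sub_zero (r₀ r₁ : ℝ) (V r V0 : ℕ → ℝ) (hr0 : r 0 = 1 - r₀)
    (hr1 : r 1 = r₁) (hV0 : ∀ s, V0 s = (s : ℝ) + r s * V (s + 1) + (1 - r s) * V 0) :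
    V0 1 - V0 0 = 1 + (r₀ + r₁ - 1) * (V 1 - V 0) + r₁ * (V 2 - V 1) := by
  rw [hV0 1, hV0 0, hr0, hr1]
  push_cast
  ring

theorem aosi_idle_value_increasing_at_zero_general
    (r₀ r₁ : ℝ) (hr₁ : r₁ ∈ Set.Icc (0:ℝ) 1)
    (hsum : 1 ≤ r₀ + r₁)
    (V : ℕ → ℝ) (hV : Monotone V)
    (r : ℕ → ℝ) (hr0 : r 0 = 1 - r₀) (hrpos : ∀ s, 0 < s → r s = r₁)
    (V0 : ℕ → ℝ)
    (hV0 : ∀ s, V0 s = (s : ℝ) + r s * V (s + 1) + (1 - r s) * V 0) :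
    V0 1 - V0 0 ≥ 1 + (r₀ + r₁ - 1) * (V 1 - V 0) ∧
    1 + (r₀ + r₁ - 1) * (V 1 - V 0) ≥ 0 := by
  have hV01 : V 0 ≤ V 1 := hV zero_le_one
  have hV12 : V 1 ≤ V 2 := hV one_le_two
  rw [idle_value_one_sub_zero r₀ r₁ V r V0 hr0 (hrpos 1 one_pos) hV0]
  constructor
  · linarith [mul_nonneg hr₁.1 (sub_nonneg.2 hV12)]
  · linarith [mul_nonneg (sub_nonneg.2 hsum) (sub_nonneg.2 hV01)]

/-- Boundary step of the monotonicity induction: V⁰ is increasing at 0. -/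
theorem aosi_idle_value_increasing_at_zero
    (r₀ r₁ : ℝ) (hr₀ : r₀ ∈ Set.Icc (0:ℝ) 1) (hr₁ : r₁ ∈ Set.Icc (0:ℝ) 1)
    (hsum : 1 ≤ r₀ + r₁)
    (V : ℕ → ℝ) (hV : Monotone V)
    (r : ℕ → ℝ) (hr0 : r 0 = 1 - r₀) (hrpos : ∀ s, 0 < s → r s = r₁)
    (V0 : ℕ → ℝ)
    (hV0 : ∀ s, V0 s = (s : ℝ) + r s * V (s + 1) + (1 - r s) * V 0) :
    V0 1 - V0 0 ≥ 1 + (r₀ + r₁ - 1) * (V 1 - V 0) ∧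
    1 + (r₀ + r₁ - 1) * (V 1 - V 0) ≥ 0 :=
  aosi_idle_value_increasing_at_zero_general r₀ r₁ hr₁ hsum V hV r hr0 hrpos V0 hV0
end
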